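/- arXiv:0902.4657 — 4 statements merged into one kernel-verified Lean document; each statement's English description precedes it below -/
import Mathlib

section
/- Let p be a prime, r > s > 0 integers, m a positive integer with p ∤ m, q = p^r, and n = m·p^s. Then the greatest common divisor of the set of integers { ⌊mi/p^{r-s}⌋ : 0 < i < q, p ∤ i, ⌊mi/p^{r-s}⌋ > 0 } equals 1. -/
/-!
Put `T = p^(r-s)` and pick `0 < j < T` with `m * j ≡ 1 [MOD T]`, say `m * j = T * a + 1`.
Both `j` and `j + T < 2 * T ≤ p^r` are admissible indices, with quotients `a` and `a + m`.
A common divisor of all positive quotients divides both (trivially so if `a = 0`), hence `m`,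
hence `m * j - T * a = 1`.
-/

theorem Finset.gcd_filter_and_pos_dvd {ι : Type*} {s : Finset ι} {P : ι → Prop}
    [DecidablePred P] {f : ι → ℕ} {i : ι} (hi : i ∈ s) (hP : P i) :
    (s.filter fun i => P i ∧ 0 < f i).gcd f ∣ f i := by
  rcases (f i).eq_zero_or_pos with h | h
  · rw [h]; exact dvd_zero _
  · exact Finset.gcd_dvd (Finset.mem_filter.2 ⟨hi, hP, h⟩)

theorem Nat.coprime_of_mul_mod_eq_one {m j T : ℕ} (h : m * j % T = 1) : j.Coprime T := by
  refine Nat.Coprime.coprime_mul_left (k := m) ?_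
  rw [Nat.Coprime, Nat.gcd_comm, Nat.gcd_rec, h, Nat.gcd_one_left]

theorem Nat.gcd_filter_coprime_mul_div_eq_one {m T q : ℕ} (hT : 1 < T) (hmT : m.Coprime T)
    (hq : 2 * T ≤ q) :
    ((Finset.Ioo 0 q).filter fun i => i.Coprime T ∧ 0 < m * i / T).gcd (fun i => m * i / T)
      = 1 := by
  set g := ((Finset.Ioo 0 q).filter fun i => i.Coprime T ∧ 0 < m * i / T).gcd
    (fun i => m * i / T)
  obtain ⟨j, hjT, hj⟩ := Nat.exists_mul_mod_eq_one_of_coprime hmT hT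
  have hmj : m * j = T * (m * j / T) + 1 := hj ▸ (Nat.div_add_mod _ _).symm
  have hj0 : 0 < j := Nat.pos_of_ne_zero fun h => by simp [h] at hj
  have hjcop : j.Coprime T := Nat.coprime_of_mul_mod_eq_one hj
  have hga : g ∣ m * j / T :=
    Finset.gcd_filter_and_pos_dvd (Finset.mem_Ioo.2 ⟨hj0, by omega⟩) hjcop
  have hgam : g ∣ m * j / T + m := by
    have h := Finset.gcd_filter_and_pos_dvd (P := fun i => i.Coprime T) (f := fun i => m * i / T)
      (Finset.mem_Ioo.2 ⟨by omega, by omega⟩ : j + T ∈ Finset.Ioo 0 q)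
      (Nat.coprime_add_self_left.2 hjcop)
    rwa [Nat.mul_add, Nat.add_mul_div_right _ _ (by omega)] at h
  have hgm : g ∣ m := (Nat.dvd_add_right hga).1 hgam
  have hg1 : g ∣ T * (m * j / T) + 1 := hmj ▸ dvd_mul_of_dvd_left hgm j
  exact Nat.dvd_one.1 ((Nat.dvd_add_right (dvd_mul_of_dvd_right hga T)).1 hg1)

theorem stmt_4_general (p r s m : ℕ) (hp : p.Prime) (hs : 0 < s) (hsr : s < r)
    (hpm : ¬ p ∣ m) :
    Finset.gcd
      ((Finset.Ioo 0 (p ^ r)).filter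
        (fun i => ¬ p ∣ i ∧ 0 < m * i / p ^ (r - s)))
      (fun i => m * i / p ^ (r - s)) = 1 := by
  have ht : 0 < r - s := by omega
  have hcop : ∀ i, i.Coprime (p ^ (r - s)) ↔ ¬ p ∣ i := fun i => by
    rw [Nat.coprime_pow_right_iff ht, Nat.coprime_comm, hp.coprime_iff_not_dvd]
  have hq : 2 * p ^ (r - s) ≤ p ^ r := calc
    2 * p ^ (r - s) ≤ p ^ s * p ^ (r - s) :=
      Nat.mul_le_mul_right _ (hp.two_le.trans (Nat.le_self_pow hs.ne' p))
    _ = p ^ r := by rw [← pow_add]; congr 1; omega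
  have h := Nat.gcd_filter_coprime_mul_div_eq_one (Nat.one_lt_pow ht.ne' hp.one_lt)
    ((hcop m).2 hpm) hq
  simpa only [hcop] using h

/-- For `p` prime, `0 < s < r`, `m > 0` with `p ∤ m`, `q = p^r`, the gcd of the
set of positive values `⌊mi/p^(r-s)⌋` over integers `0 < i < q` with `p ∤ i`
equals `1`. -/
theorem stmt_4 (p r s m : ℕ) (hp : p.Prime) (hs : 0 < s) (hsr : s < r)
    (hm : 0 < m) (hpm : ¬ p ∣ m) :
    Finset.gcd
      ((Finset.Ioo 0 (p ^ r)).filter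
        (fun i => ¬ p ∣ i ∧ 0 < m * i / p ^ (r - s)))
      (fun i => m * i / p ^ (r - s)) = 1 :=
  stmt_4_general p r s m hp hs hsr hpm
end

section
/- Let p be an odd prime and q = p^r. Let f be a function from (ℤ/qℤ)^× to ℝ that is monotone (nondecreasing) when viewed as a function on the representatives {1 ≤ i ≤ q : p ∤ i} ordered as integers. Let k ∈ (ℤ/qℤ)^×. Then f(k·u) = f(u) for all u ∈ (ℤ/qℤ)^× if and only if k = 1 or f is constant. -/
/-!
Suppose `f` is `θ_k`-invariant and not constant, so `f 1 < f (-1)`. The set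
`D = {u | f u < f (-u)}` is `θ_k`-stable, downward closed for the order of representatives, and
disjoint from `-D`; hence its representatives form an interval `[1, τ]` with `2τ < q` that
multiplication by `k` preserves. Then `k ≤ τ` (image of `1`) and `2k ≤ τ` (image of `2`, as `p`
is odd); for `n = ⌊τ / k⌋ + 1` both `kn` and `k(n + 1)` lie in `(τ, q)`, and one of `n`, `n + 1`
is prime to `p`, a contradiction unless `k = 1`.
-/

theorem Nat.le_one_of_forall_mul_mod_le {p q τ h : ℕ} (hp2 : ¬ p ∣ 2) (hτ : 1 ≤ τ)
    (hτq : 2 * τ < q) (hhq : h < q) (hstab : ∀ x ≤ τ, ¬ p ∣ x → h * x % q ≤ τ) : h ≤ 1 := by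
  have hp1 : ¬ p ∣ 1 := fun h1 => hp2 (h1.trans (one_dvd 2))
  have hhτ : h ≤ τ := by simpa [Nat.mod_eq_of_lt hhq] using hstab 1 hτ hp1
  by_contra! h2
  have h2τ : 2 * h ≤ τ := by
    simpa [Nat.mod_eq_of_lt (show h * 2 < q by omega), mul_comm] using hstab 2 (by omega) hp2
  have hescape : ∀ x ≤ τ, τ < h * x → h * x < q → p ∣ x := fun x hxτ hlo hhi => by
    by_contra hx
    have := hstab x hxτ hx
    rw [Nat.mod_eq_of_lt hhi] at this
    omega
  have hd := Nat.div_add_mod τ h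
  have hmod := Nat.mod_lt τ (show 0 < h by omega)
  set d := τ / h
  have hdh : 2 * d ≤ h * d := Nat.mul_le_mul_right d h2
  have hn := hescape (d + 1) (by omega) (by rw [mul_add]; omega) (by rw [mul_add]; omega)
  have hn1 := hescape (d + 2) (by omega) (by rw [mul_add]; omega) (by rw [mul_add]; omega)
  exact hp1 ((Nat.dvd_add_right hn).mp hn1)

namespace ZMod

theorem exists_units_val_eq {p r x : ℕ} (hp : p.Prime) (hx : ¬ p ∣ x) (hxq : x < p ^ r) :
    ∃ u : (ZMod (p ^ r))ˣ, (u : ZMod (p ^ r)).val = x := by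
  have hcop : x.Coprime (p ^ r) :=
    Nat.Coprime.pow_right r (Nat.coprime_comm.mp ((Nat.Prime.coprime_iff_not_dvd hp).mpr hx))
  refine ⟨unitOfCoprime x hcop, ?_⟩
  rw [coe_unitOfCoprime, val_natCast, Nat.mod_eq_of_lt hxq]

variable {n : ℕ} [Fact (1 < n)]

theorem units_val_neg (u : (ZMod n)ˣ) :
    ((-u : (ZMod n)ˣ) : ZMod n).val = n - (u : ZMod n).val := by
  rw [Units.val_neg, neg_val, if_neg u.ne_zero]

theorem one_le_units_val (u : (ZMod n)ˣ) : 1 ≤ (u : ZMod n).val :=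
  val_pos.mpr u.ne_zero

theorem units_eq_one_of_val_le_one {u : (ZMod n)ˣ} (hu : (u : ZMod n).val ≤ 1) : u = 1 :=
  Units.ext ((val_eq_one Fact.out _).mp (le_antisymm hu (one_le_units_val u)))

theorem exists_mem_iff_units_val_le (D : Set (ZMod n)ˣ) (hne : D.Nonempty)
    (hdown : ∀ u v : (ZMod n)ˣ, (u : ZMod n).val ≤ (v : ZMod n).val → v ∈ D → u ∈ D)
    (hneg : ∀ u ∈ D, -u ∉ D) :
    ∃ τ, 2 * τ < n ∧ ∀ u : (ZMod n)ˣ, u ∈ D ↔ (u : ZMod n).val ≤ τ := by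
  obtain ⟨u₀, hu₀, hmax⟩ := Set.exists_max_image D (fun u => (u : ZMod n).val) D.toFinite hne
  refine ⟨(u₀ : ZMod n).val, ?_, fun u => ⟨hmax u, fun hu => hdown u u₀ hu hu₀⟩⟩
  by_contra! hτ
  exact hneg u₀ hu₀ (hdown _ u₀ (by rw [units_val_neg]; omega) hu₀)

end ZMod

open ZMod

section Invariant

variable {n : ℕ} [Fact (1 < n)] {f : (ZMod n)ˣ → ℝ} {k : (ZMod n)ˣ}

theorem lt_neg_one_of_not_forall_eq
    (hmono : ∀ u v : (ZMod n)ˣ, (u : ZMod n).val ≤ (v : ZMod n).val → f u ≤ f v)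
    (hconst : ¬ ∀ u v, f u = f v) : f 1 < f (-1) := by
  have hmin : ∀ u, f 1 ≤ f u := fun u =>
    hmono _ _ (by rw [Units.val_one, val_one]; exact one_le_units_val u)
  have hmax : ∀ u, f u ≤ f (-1) := fun u =>
    hmono _ _ (by rw [units_val_neg, Units.val_one, val_one]; have := val_lt (u : ZMod n); omega)
  refine (hmin _).lt_of_ne fun h => hconst fun u v => ?_
  linarith [hmin u, hmin v, hmax u, hmax v]

theorem exists_mul_stable_units_val_interval
    (hmono : ∀ u v : (ZMod n)ˣ, (u : ZMod n).val ≤ (v : ZMod n).val → f u ≤ f v)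
    (hinv : ∀ u, f (k * u) = f u) (hlt : f 1 < f (-1)) :
    ∃ τ, 1 ≤ τ ∧ 2 * τ < n ∧
      ∀ u : (ZMod n)ˣ, (u : ZMod n).val ≤ τ → ((k * u : (ZMod n)ˣ) : ZMod n).val ≤ τ := by
  have hdown : ∀ u v : (ZMod n)ˣ, (u : ZMod n).val ≤ (v : ZMod n).val →
      f v < f (-v) → f u < f (-u) := fun u v huv hv =>
    (hmono u v huv).trans_lt <| hv.trans_le <| hmono _ _ <| by
      rw [units_val_neg, units_val_neg]; omega
  obtain ⟨τ, hτq, hD⟩ := exists_mem_iff_units_val_le {u | f u < f (-u)} ⟨1, hlt⟩ hdown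
    fun u hu hnu => by simp only [Set.mem_ofPred_eq, neg_neg] at hu hnu; linarith
  refine ⟨τ, ?_, hτq, fun u hu => ?_⟩
  · simpa [val_one] using (hD 1).mp hlt
  · apply (hD _).mp
    simpa [Set.mem_ofPred_eq, ← mul_neg, hinv] using (hD u).mpr hu

end Invariant

theorem units_eq_one_of_forall_val_mul_le {p r τ : ℕ} (hp : p.Prime) (hodd : p ≠ 2)
    [Fact (1 < p ^ r)] (hτ : 1 ≤ τ) (hτq : 2 * τ < p ^ r) {k : (ZMod (p ^ r))ˣ}
    (hk : ∀ u : (ZMod (p ^ r))ˣ, (u : ZMod (p ^ r)).val ≤ τ →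
      ((k * u : (ZMod (p ^ r))ˣ) : ZMod (p ^ r)).val ≤ τ) : k = 1 := by
  have hp2 : ¬ p ∣ 2 := fun h2 => hodd ((Nat.prime_dvd_prime_iff_eq hp Nat.prime_two).mp h2)
  refine units_eq_one_of_val_le_one (Nat.le_one_of_forall_mul_mod_le hp2 hτ hτq (val_lt _) ?_)
  intro x hxτ hx
  obtain ⟨u, rfl⟩ := exists_units_val_eq (r := r) hp hx (by omega)
  simpa [val_mul] using hk u hxτ

/-- Let `p` be an odd prime, `q = p^r`, and `f : (ℤ/qℤ)ˣ → ℝ` monotone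
(nondecreasing) on the representatives in `{1, …, q}` coprime to `p`,
ordered as integers. For `k ∈ (ℤ/qℤ)ˣ`: `f(k·u) = f(u)` for all `u` iff
`k = 1` or `f` is constant. -/
theorem stmt_5 (p r : ℕ) (hp : p.Prime) (hodd : p ≠ 2) (hr : 1 ≤ r)
    (f : (ZMod (p ^ r))ˣ → ℝ)
    (hmono : ∀ u v : (ZMod (p ^ r))ˣ,
      (u : ZMod (p ^ r)).val ≤ (v : ZMod (p ^ r)).val → f u ≤ f v)
    (k : (ZMod (p ^ r))ˣ) :
    (∀ u : (ZMod (p ^ r))ˣ, f (k * u) = f u) ↔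
      (k = 1 ∨ ∀ u v : (ZMod (p ^ r))ˣ, f u = f v) := by
  have : Fact (1 < p ^ r) := ⟨Nat.one_lt_pow (by omega) hp.one_lt⟩
  refine ⟨fun hinv => ?_, ?_⟩
  · by_cases hconst : ∀ u v : (ZMod (p ^ r))ˣ, f u = f v
    · exact Or.inr hconst
    have hlt := lt_neg_one_of_not_forall_eq hmono hconst
    obtain ⟨τ, hτ, hτq, hstab⟩ := exists_mul_stable_units_val_interval hmono hinv hlt
    exact Or.inl (units_eq_one_of_forall_val_mul_le hp hodd hτ hτq hstab)
  · rintro (rfl | hconst) u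
    · rw [one_mul]
    · exact hconst _ _
end

section
/- Let q = 2^r and let k ≠ 1 be an element of (ℤ/2^rℤ)^×. Suppose f : (ℤ/2^rℤ)^× → ℝ is monotone (nondecreasing) on the odd representatives {1, 3, ..., 2^r - 1} ordered as integers, and f(k·u) = f(u) for all u ∈ (ℤ/2^rℤ)^×. Then f is constant on the representatives {1, 3, ..., 2^{r-1} - 1}. -/
/-- Let `q = 2^r` and `k ≠ 1` in `(ℤ/2^rℤ)ˣ`. If `f : (ℤ/2^rℤ)ˣ → ℝ` is
nondecreasing on the odd representatives `{1, 3, …, 2^r - 1}` ordered as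
integers and satisfies `f(k·u) = f(u)` for all `u`, then `f` is constant on
the representatives in `[1, 2^(r-1)]`. -/
theorem stmt_6 (r : ℕ) (hr : 1 ≤ r) (k : (ZMod (2 ^ r))ˣ) (hk : k ≠ 1)
    (f : (ZMod (2 ^ r))ˣ → ℝ)
    (hmono : ∀ u v : (ZMod (2 ^ r))ˣ,
      (u : ZMod (2 ^ r)).val ≤ (v : ZMod (2 ^ r)).val → f u ≤ f v)
    (hinv : ∀ u : (ZMod (2 ^ r))ˣ, f (k * u) = f u) :
    ∀ u v : (ZMod (2 ^ r))ˣ,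
      (u : ZMod (2 ^ r)).val ≤ 2 ^ (r - 1) →
      (v : ZMod (2 ^ r)).val ≤ 2 ^ (r - 1) → f u = f v := by
  haveI : NeZero (2 ^ r) := ⟨by positivity⟩
  haveI : Fact (1 < 2 ^ r) := ⟨by
    calc 1 < 2 ^ 1 := by norm_num
    _ ≤ 2 ^ r := Nat.pow_le_pow_right (by norm_num) hr⟩
  -- order of k is a nontrivial power of 2
  have hcard : Fintype.card (ZMod (2 ^ r))ˣ = 2 ^ (r - 1) := by
    rw [ZMod.card_units_eq_totient, Nat.totient_prime_pow Nat.prime_two (by omega)]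
    simp
  have hord : orderOf k ∣ 2 ^ (r - 1) := hcard ▸ orderOf_dvd_card
  obtain ⟨t, htle, ht⟩ := (Nat.dvd_prime_pow Nat.prime_two).mp hord
  have ht1 : 1 ≤ t := by
    rcases Nat.eq_zero_or_pos t with h0 | h
    · subst h0; simp at ht; exact absurd ht hk
    · exact h
  have hr2 : 2 ≤ r := by omega
  -- the order-2 element g
  set g : (ZMod (2 ^ r))ˣ := k ^ (2 ^ (t - 1)) with hg
  have hg2 : g ^ 2 = 1 := by
    have h2t : 2 ^ (t - 1) * 2 = 2 ^ t := by rw [← pow_succ]; congr 1; omega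
    rw [hg, ← pow_mul, h2t, ← ht, pow_orderOf_eq_one]
  have hgne : g ≠ 1 := by
    intro h
    have := orderOf_dvd_iff_pow_eq_one.mpr h
    rw [ht] at this
    have := Nat.le_of_dvd (by positivity) this
    have : (2:ℕ) ^ t ≤ 2 ^ (t-1) := this
    have := Nat.pow_le_pow_iff_right (a := 2) (by norm_num) |>.mp this
    omega
  -- val of g is ≥ 2^(r-1) - 1
  set a : ℕ := ((g : ZMod (2 ^ r))).val with ha
  have hacop : Nat.Coprime a (2 ^ r) := ZMod.val_coe_unit_coprime g
  have haodd : Odd a := by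
    rcases Nat.even_or_odd a with he | ho
    · exfalso
      have h2 : (2:ℕ) ∣ a := he.two_dvd
      have h2' : (2:ℕ) ∣ 2 ^ r := dvd_pow_self 2 (by omega)
      have := Nat.eq_one_of_dvd_coprimes hacop h2 h2'
      omega
    · exact ho
  have halt : a < 2 ^ r := ZMod.val_lt _
  have hane1 : a ≠ 1 := by
    intro h
    apply hgne
    apply Units.ext
    have h1 : ((a : ℕ) : ZMod (2 ^ r)) = (g : ZMod (2 ^ r)) := by
      rw [ha, ZMod.natCast_val, ZMod.cast_id]
    rw [h] at h1
    simpa using h1.symm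
  have ha1 : 1 ≤ a := by
    rcases Nat.eq_zero_or_pos a with h0 | h; swap; · exact h
    exfalso
    have : (g : ZMod (2 ^ r)) = 0 := (ZMod.val_eq_zero _).mp h0
    exact (g.ne_zero) this
  have hsq : a ^ 2 ≡ 1 [MOD 2 ^ r] := by
    have h1 : ((g : ZMod (2 ^ r)))^2 = 1 := by
      have := congrArg (Units.val) hg2; simpa using this
    have h2 : ((a ^ 2 : ℕ) : ZMod (2 ^ r)) = ((1:ℕ) : ZMod (2 ^ r)) := by
      push_cast
      rw [ZMod.natCast_val, ZMod.cast_id]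
      simpa using h1
    exact (ZMod.natCast_eq_natCast_iff _ _ _).mp h2
  have hdvd : 2 ^ r ∣ a ^ 2 - 1 := (Nat.modEq_iff_dvd' (by nlinarith)).mp hsq.symm
  obtain ⟨b, hb⟩ := haodd
  have hfac : a ^ 2 - 1 = 4 * (b * (b + 1)) := by
    have : a ^ 2 = 4 * (b * (b + 1)) + 1 := by rw [hb]; ring
    omega
  have hdvd2 : 2 ^ (r - 2) ∣ b * (b + 1) := by
    have h : (2:ℕ) ^ 2 * 2 ^ (r - 2) ∣ 2 ^ 2 * (b * (b + 1)) := by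
      have h1 : (2:ℕ) ^ 2 * 2 ^ (r - 2) = 2 ^ r := by rw [← pow_add]; congr 1; omega
      have h2 : (2:ℕ) ^ 2 * (b * (b + 1)) = a ^ 2 - 1 := by rw [hfac]; norm_num
      rw [h1, h2]; exact hdvd
    exact (Nat.mul_dvd_mul_iff_left (by positivity : (0:ℕ) < 2 ^ 2)).mp h
  have hag : 2 ^ (r - 1) - 1 ≤ a := by
    have hpow : (2:ℕ) ^ (r-1) = 2 * 2 ^ (r-2) := by
      rw [← pow_succ']; congr 1; omega
    rcases Nat.even_or_odd b with hbe | hbo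
    · -- b even, b+1 odd: 2^(r-2) ∣ b
      have hcop : Nat.Coprime (2 ^ (r-2)) (b+1) :=
        Nat.Coprime.pow_left _ (Nat.coprime_two_left.mpr (Even.add_one hbe))
      have hdb : 2 ^ (r-2) ∣ b := hcop.dvd_of_dvd_mul_right hdvd2
      have hbne : b ≠ 0 := by omega
      have := Nat.le_of_dvd (by omega) hdb
      omega
    · -- b odd: 2^(r-2) ∣ b+1
      have hcop : Nat.Coprime (2 ^ (r-2)) b :=
        Nat.Coprime.pow_left _ (Nat.coprime_two_left.mpr hbo)
      have hdb : 2 ^ (r-2) ∣ b + 1 := by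
        rw [mul_comm] at hdvd2
        exact hcop.dvd_of_dvd_mul_right hdvd2
      have := Nat.le_of_dvd (by omega) hdb
      omega
  -- f is constant on powers of k
  have hfpow : ∀ m : ℕ, f (k ^ m) = f 1 := by
    intro m
    induction m with
    | zero => simp
    | succ n ih => rw [pow_succ, mul_comm, hinv]; exact ih
  have hfg : f g = f 1 := hfpow _
  -- conclude
  have key : ∀ w : (ZMod (2 ^ r))ˣ, (w : ZMod (2 ^ r)).val ≤ 2 ^ (r - 1) → f w = f 1 := by
    intro w hw
    have hw1 : 1 ≤ (w : ZMod (2 ^ r)).val := by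
      rcases Nat.eq_zero_or_pos (w : ZMod (2 ^ r)).val with h0 | h; swap; · exact h
      exact absurd ((ZMod.val_eq_zero _).mp h0) w.ne_zero
    have hwodd : Odd (w : ZMod (2 ^ r)).val := by
      have hcop := ZMod.val_coe_unit_coprime w
      rcases Nat.even_or_odd (w : ZMod (2 ^ r)).val with he | ho
      · exfalso
        have h2' : (2:ℕ) ∣ 2 ^ r := dvd_pow_self 2 (by omega)
        have := Nat.eq_one_of_dvd_coprimes hcop he.two_dvd h2'
        omega
      · exact ho
    have hwub : (w : ZMod (2 ^ r)).val ≤ 2 ^ (r - 1) - 1 := by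
      have heven : Even ((2:ℕ) ^ (r - 1)) := by
        refine (Nat.even_pow).mpr ⟨even_two, by omega⟩
      rcases Nat.lt_or_ge (w : ZMod (2 ^ r)).val (2 ^ (r-1)) with h | h
      · omega
      · have : (w : ZMod (2 ^ r)).val = 2 ^ (r-1) := le_antisymm hw h
        rw [this] at hwodd
        exact absurd heven (Nat.not_even_iff_odd.mpr hwodd)
    have hv1 : ((1 : (ZMod (2 ^ r))ˣ) : ZMod (2 ^ r)).val = 1 := by
      simpa using ZMod.val_one (2 ^ r)
    have hle1 : f 1 ≤ f w := hmono _ _ (by rw [hv1]; exact hw1)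
    have hle2 : f w ≤ f g := hmono _ _ (by omega)
    linarith [hfg]
  intro u v hu hv
  rw [key u hu, key v hv]
end

section
/- Purely combinatorial consequence: for q = p^r, n = m·p^s with p ∤ m, 0 < s < r and n ≥ 5, the identity Σ_{i=1}^{q-1} [ni/q]_S = ((q-1)(n-1) + 1 - p^s)/2 holds, where [z]_S denotes the greatest integer strictly less than z. -/
/-!
Pair `i` with `q - i`: since `n * i + n * (q - i) = n * q`, the two strict floors add up to
`n - 1`, or to `n - 2` when `q ∣ n * i`. Summing over `1 ≤ i ≤ q - 1` counts every term twice,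
and the exceptional indices are the `gcd q n - 1` nonzero multiples of `q / gcd q n` below `q`;
for `q = p ^ r` and `n = m * p ^ s` with `p ∤ m` this gcd is `p ^ s`.
-/

/-- The greatest integer strictly less than `a / b` (for naturals `a, b`):
`⌊a/b⌋` if `b ∤ a`, and `a/b - 1` if `b ∣ a`. -/
def strictFloorDiv (a b : ℕ) : ℕ := if b ∣ a then a / b - 1 else a / b

open Finset

lemma strictFloorDiv_cast_eq {a q : ℕ} (ha : 0 < a) :
    (strictFloorDiv a q : ℤ) = ((a / q : ℕ) : ℤ) - if q ∣ a then 1 else 0 := by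
  unfold strictFloorDiv
  split_ifs with hqa
  · have hq : 0 < q := Nat.pos_of_ne_zero fun h => by simp_all
    have : 1 ≤ a / q := Nat.div_pos (Nat.le_of_dvd ha hqa) hq
    push_cast [this]
    ring
  · simp

lemma div_add_div_add_ite_of_add_eq_mul {a b k q : ℕ} (hq : 0 < q) (h : a + b = k * q) :
    a / q + b / q + (if q ∣ a then 0 else 1) = k := by
  have hk : (a + b) / q = k := by rw [h, Nat.mul_div_cancel _ hq]
  split_ifs with hqa
  · rw [← hk, Nat.add_div_of_dvd_right hqa, add_zero]
  · have hmod : q ≤ a % q + b % q :=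
      Nat.le_mod_add_mod_of_dvd_add_of_not_dvd (h ▸ dvd_mul_left q k) hqa
    rw [← hk, Nat.add_div_eq_of_le_mod_add_mod hmod hq]

lemma strictFloorDiv_add_strictFloorDiv_of_add_eq_mul {a b k q : ℕ} (ha : 0 < a) (hb : 0 < b)
    (h : a + b = k * q) :
    (strictFloorDiv a q : ℤ) + strictFloorDiv b q = k - 1 - if q ∣ a then 1 else 0 := by
  have hq : 0 < q := Nat.pos_of_ne_zero fun hq => by simp [hq] at h; omega
  have hdvd : q ∣ b ↔ q ∣ a := by
    have hab : q ∣ a + b := h ▸ dvd_mul_left q k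
    exact ⟨fun hqb => (Nat.dvd_add_left hqb).mp hab, fun hqa => (Nat.dvd_add_right hqa).mp hab⟩
  have hdiv := div_add_div_add_ite_of_add_eq_mul hq h
  rw [strictFloorDiv_cast_eq ha, strictFloorDiv_cast_eq hb]
  simp only [hdvd]
  split_ifs at hdiv ⊢ <;> omega

lemma sum_Icc_reflect {M : Type*} [AddCommMonoid M] (f : ℕ → M) (q : ℕ) :
    ∑ i ∈ Icc 1 (q - 1), f (q - i) = ∑ i ∈ Icc 1 (q - 1), f i := by
  refine sum_nbij' (fun i => q - i) (fun i => q - i) ?_ ?_ ?_ ?_ (fun _ _ => rfl) <;>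
    intro i hi <;> simp only [mem_Icc] at hi ⊢ <;> omega

lemma two_mul_sum_strictFloorDiv {n q : ℕ} (hn : 0 < n) (hq : 0 < q) :
    2 * ∑ i ∈ Icc 1 (q - 1), (strictFloorDiv (n * i) q : ℤ) =
      ((q : ℤ) - 1) * ((n : ℤ) - 1) - #{i ∈ Icc 1 (q - 1) | q ∣ n * i} := by
  have hpair : ∀ i ∈ Icc 1 (q - 1),
      (strictFloorDiv (n * i) q : ℤ) + strictFloorDiv (n * (q - i)) q =
        ((n : ℤ) - 1) - if q ∣ n * i then 1 else 0 := by
    intro i hi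
    rw [mem_Icc] at hi
    refine strictFloorDiv_add_strictFloorDiv_of_add_eq_mul (Nat.mul_pos hn (by omega))
      (Nat.mul_pos hn (by omega)) ?_
    rw [← Nat.mul_add, Nat.add_sub_cancel' (by omega), mul_comm]
  rw [two_mul]
  nth_rw 2 [← sum_Icc_reflect (fun i => (strictFloorDiv (n * i) q : ℤ)) q]
  rw [← sum_add_distrib, sum_congr rfl hpair, sum_sub_distrib,
    sum_boole, sum_const, Nat.card_Icc, nsmul_eq_mul, Nat.add_sub_cancel,
    Nat.cast_sub hq]
  push_cast
  ring

lemma dvd_mul_iff_div_gcd_dvd {q n i : ℕ} (hq : 0 < q) : q ∣ n * i ↔ q / q.gcd n ∣ i := by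
  obtain ⟨q', n', hcop, hq', hn'⟩ := Nat.exists_coprime q n
  have hg : 0 < q.gcd n := Nat.gcd_pos_of_pos_left n hq
  set g := q.gcd n
  clear_value g
  rw [hq', Nat.mul_div_cancel _ hg, hn', mul_right_comm, mul_dvd_mul_iff_right hg.ne']
  exact hcop.dvd_mul_left

lemma card_filter_Icc_dvd_mul_eq_gcd_sub_one {q n : ℕ} (hq : 0 < q) :
    #{i ∈ Icc 1 (q - 1) | q ∣ n * i} = q.gcd n - 1 := by
  have hg : 0 < q.gcd n := Nat.gcd_pos_of_pos_left n hq
  have hd : 0 < q / q.gcd n := Nat.div_pos (Nat.gcd_le_left n hq) hg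
  have hqd : q = q.gcd n * (q / q.gcd n) := (Nat.mul_div_cancel' (Nat.gcd_dvd_left q n)).symm
  simp_rw [dvd_mul_iff_div_gcd_dvd hq]
  rw [show Icc 1 (q - 1) = Ioc 0 (q - 1) from Icc_add_one_left_eq_Ioc 0 (q - 1),
    Nat.Ioc_filter_dvd_card_eq_div]
  refine Nat.div_eq_of_lt_le ?_ ?_
  · rw [Nat.sub_one_mul, ← hqd]
    omega
  · rw [Nat.sub_add_cancel hg, ← hqd]
    omega

lemma gcd_pow_mul_pow_of_not_dvd {p r s m : ℕ} (hp : p.Prime) (hpm : ¬ p ∣ m) (hsr : s ≤ r) :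
    (p ^ r).gcd (m * p ^ s) = p ^ s := by
  have hcop : (p ^ (r - s)).Coprime m := ((Nat.Prime.coprime_iff_not_dvd hp).mpr hpm).pow_left _
  rw [← Nat.sub_add_cancel hsr, pow_add, Nat.gcd_mul_right, hcop, one_mul]

theorem stmt_15_general (p r s m n : ℕ) (hp : p.Prime) (hsr : s < r)
    (hpm : ¬ p ∣ m) (hn : n = m * p ^ s) (hn5 : 5 ≤ n) :
    (∑ i ∈ Finset.Icc 1 (p ^ r - 1), (strictFloorDiv (n * i) (p ^ r) : ℤ)) =
      (((p : ℤ) ^ r - 1) * ((n : ℤ) - 1) + 1 - (p : ℤ) ^ s) / 2 := by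
  have hq : 0 < p ^ r := pow_pos hp.pos r
  have hcount : #{i ∈ Icc 1 (p ^ r - 1) | p ^ r ∣ n * i} = p ^ s - 1 := by
    rw [card_filter_Icc_dvd_mul_eq_gcd_sub_one hq, hn, gcd_pow_mul_pow_of_not_dvd hp hpm hsr.le]
  have htwo : 2 * ∑ i ∈ Icc 1 (p ^ r - 1), (strictFloorDiv (n * i) (p ^ r) : ℤ) =
      ((p : ℤ) ^ r - 1) * ((n : ℤ) - 1) + 1 - (p : ℤ) ^ s := by
    rw [two_mul_sum_strictFloorDiv (by omega) hq, hcount,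
      Nat.cast_sub (Nat.one_le_pow _ _ hp.pos)]
    push_cast
    ring
  rw [← htwo, Int.mul_ediv_cancel_left _ two_ne_zero]

/-- For `q = p^r`, `n = m·p^s ≥ 5` with `p ∤ m` and `0 < s < r`:
`Σ_{i=1}^{q-1} [ni/q]_S = ((q-1)(n-1) + 1 - p^s)/2`, where `[z]_S` is the
greatest integer strictly less than `z`. -/
theorem stmt_15 (p r s m n : ℕ) (hp : p.Prime) (hs : 0 < s) (hsr : s < r)
    (hm : 0 < m) (hpm : ¬ p ∣ m) (hn : n = m * p ^ s) (hn5 : 5 ≤ n) :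
    (∑ i ∈ Finset.Icc 1 (p ^ r - 1), (strictFloorDiv (n * i) (p ^ r) : ℤ)) =
      (((p : ℤ) ^ r - 1) * ((n : ℤ) - 1) + 1 - (p : ℤ) ^ s) / 2 :=
  stmt_15_general p r s m n hp hsr hpm hn hn5
end
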